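/- Let $2 \le p \le \infty$ and $\beta \ge -1$. Then $T^p_{\beta+1} \subset L^2_{loc}(\overline{\mathbb{R}^{1+n}_+})$: for every ball $B \subset \mathbb{R}^n$ and every $0 < T < r(B)^2$, $\left(\int_0^T \int_B |u(t,y)|^2\, dy\, dt\right)^{1/2} \lesssim_p T^{\beta+1} |B|^{\frac{1}{2}-\frac{1}{p}} \|u\|_{T^p_{\beta+1}}$. -/

import Mathlib

open MeasureTheory Metric Set ENNReal NNReal

noncomputable section

abbrev Spc (n : ℕ) := EuclideanSpace ℝ (Fin n)

/-- The parabolic (`m = 2`) conical square function `A_β(u)(x)`. -/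
def conicalSq (n : ℕ) (β : ℝ) (u : ℝ → Spc n → ℂ) (x : Spc n) : ℝ≥0∞ :=
  (∫⁻ t in Ioi (0:ℝ), (volume (ball x (t ^ ((2:ℝ)⁻¹))))⁻¹ *
      ∫⁻ y in ball x (t ^ ((2:ℝ)⁻¹)),
        (ENNReal.ofReal (t ^ (-β)) * (‖u t y‖₊ : ℝ≥0∞)) ^ 2) ^ (1/2 : ℝ)

/-- `‖u‖_{T^∞_β}`: supremum over balls of the Carleson box averages. -/
def tentNormTop (n : ℕ) (β : ℝ) (u : ℝ → Spc n → ℂ) : ℝ≥0∞ :=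
  ⨆ (x : Spc n) (r : {r : ℝ // 0 < r}),
    (∫⁻ t in Ioc (0:ℝ) ((r:ℝ)^2), (volume (ball x (r:ℝ)))⁻¹ *
        ∫⁻ y in ball x (r:ℝ),
          (ENNReal.ofReal (t ^ (-β)) * (‖u t y‖₊ : ℝ≥0∞)) ^ 2) ^ (1/2 : ℝ)

/-- The parabolic tent space (quasi-)norm `‖u‖_{T^p_β}` for `0 < p ≤ ∞`. -/
def tentFull (n : ℕ) (p : ℝ≥0∞) (β : ℝ) (u : ℝ → Spc n → ℂ) : ℝ≥0∞ :=
  if p = ∞ then tentNormTop n β u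
  else (∫⁻ x : Spc n, conicalSq n β u x ^ p.toReal) ^ (1/p.toReal)

/-- The `L^p`-norm, `0 < p ≤ ∞`, of an `ℝ≥0∞`-valued function. -/
def pNormE (n : ℕ) (p : ℝ≥0∞) (F : Spc n → ℝ≥0∞) : ℝ≥0∞ :=
  if p = ∞ then essSup F volume else (∫⁻ x : Spc n, F x ^ p.toReal) ^ (1/p.toReal)

section Aux

variable {n : ℕ}

private lemma sqrt_sq_aux {r : ℝ} (hr : 0 < r) : ((r:ℝ)^2) ^ ((2:ℝ)⁻¹) = r := by
  rw [← Real.rpow_natCast r 2, ← Real.rpow_mul hr.le]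
  norm_num

private lemma meas_indicator_aux (G : ℝ → Spc n → ℝ≥0∞)
    (hG : Measurable (fun q : ℝ × Spc n => G q.1 q.2)) :
    Measurable (fun z : (ℝ × Spc n) × Spc n =>
      (ball z.1.2 (z.1.1 ^ ((2:ℝ)⁻¹))).indicator (G z.1.1) z.2) := by
  have hs : MeasurableSet {z : (ℝ × Spc n) × Spc n | z.2 ∈ ball z.1.2 (z.1.1 ^ ((2:ℝ)⁻¹))} := by
    have : {z : (ℝ × Spc n) × Spc n | z.2 ∈ ball z.1.2 (z.1.1 ^ ((2:ℝ)⁻¹))}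
        = {z : (ℝ × Spc n) × Spc n | dist z.2 z.1.2 < z.1.1 ^ ((2:ℝ)⁻¹)} := rfl
    rw [this]
    exact measurableSet_lt (by fun_prop) (by fun_prop)
  have heq : (fun z : (ℝ × Spc n) × Spc n =>
        (ball z.1.2 (z.1.1 ^ ((2:ℝ)⁻¹))).indicator (G z.1.1) z.2)
      = {z : (ℝ × Spc n) × Spc n | z.2 ∈ ball z.1.2 (z.1.1 ^ ((2:ℝ)⁻¹))}.indicator
          (fun z => G z.1.1 z.2) := by
    ext z; rfl
  rw [heq]
  exact (hG.comp (measurable_fst.fst.prodMk measurable_snd)).indicator hs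

private lemma meas_indicator_aux2 (G : ℝ → Spc n → ℝ≥0∞)
    (hG : Measurable (fun q : ℝ × Spc n => G q.1 q.2)) :
    Measurable (fun z : (Spc n × ℝ) × Spc n =>
      (ball z.1.1 (z.1.2 ^ ((2:ℝ)⁻¹))).indicator (G z.1.2) z.2) := by
  have hs : MeasurableSet {z : (Spc n × ℝ) × Spc n | z.2 ∈ ball z.1.1 (z.1.2 ^ ((2:ℝ)⁻¹))} := by
    have : {z : (Spc n × ℝ) × Spc n | z.2 ∈ ball z.1.1 (z.1.2 ^ ((2:ℝ)⁻¹))}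
        = {z : (Spc n × ℝ) × Spc n | dist z.2 z.1.1 < z.1.2 ^ ((2:ℝ)⁻¹)} := rfl
    rw [this]
    exact measurableSet_lt (by fun_prop) (by fun_prop)
  have heq : (fun z : (Spc n × ℝ) × Spc n =>
        (ball z.1.1 (z.1.2 ^ ((2:ℝ)⁻¹))).indicator (G z.1.2) z.2)
      = {z : (Spc n × ℝ) × Spc n | z.2 ∈ ball z.1.1 (z.1.2 ^ ((2:ℝ)⁻¹))}.indicator
          (fun z => G z.1.2 z.2) := by
    ext z; rfl
  rw [heq]
  exact (hG.comp (measurable_fst.snd.prodMk measurable_snd)).indicator hs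

private lemma meas_indicator_fixed (st : ℝ) (G : Spc n → ℝ≥0∞) (hG : Measurable G) :
    Measurable (fun z : Spc n × Spc n => (ball z.1 st).indicator G z.2) := by
  have hs : MeasurableSet {z : Spc n × Spc n | z.2 ∈ ball z.1 st} := by
    have : {z : Spc n × Spc n | z.2 ∈ ball z.1 st} = {z | dist z.2 z.1 < st} := rfl
    rw [this]
    exact measurableSet_lt (measurable_dist.comp (measurable_snd.prodMk measurable_fst))
      measurable_const
  have heq : (fun z : Spc n × Spc n => (ball z.1 st).indicator G z.2)
      = {z : Spc n × Spc n | z.2 ∈ ball z.1 st}.indicator (fun z => G z.2) := by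
    ext z; rfl
  rw [heq]
  exact (hG.comp measurable_snd).indicator hs

private lemma meas_v_aux (n : ℕ) :
    Measurable (fun t : ℝ => (volume (ball (0 : Spc n) (t ^ ((2:ℝ)⁻¹))))⁻¹) := by
  have h1 : Monotone (fun s : ℝ => volume (ball (0 : Spc n) s)) :=
    fun a c h => measure_mono (ball_subset_ball h)
  exact (h1.measurable.comp (by fun_prop : Measurable fun t : ℝ => t ^ ((2:ℝ)⁻¹))).inv

end Aux

set_option maxHeartbeats 2000000 in
/-- For `2 ≤ p ≤ ∞` and `β ≥ -1`, `T^p_{β+1} ⊂ L²_loc(closure of ℝ^{1+n}_+)`: for every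
ball `B = B(x,r)` and `0 < T < r²`,
`(∫₀^T ∫_B |u|²)^{1/2} ≲_p T^{β+1} |B|^{1/2 - 1/p} ‖u‖_{T^p_{β+1}}`. -/
theorem stmt11 (n : ℕ) (p : ℝ≥0∞) (hp : 2 ≤ p) (β : ℝ) (hβ : -1 ≤ β) :
    ∃ C : ℝ≥0, ∀ u : ℝ → Spc n → ℂ, Measurable (Function.uncurry u) →
      ∀ (x : Spc n) (r T : ℝ), 0 < r → 0 < T → T < r^2 →
        (∫⁻ t in Ioc (0:ℝ) T, ∫⁻ y in ball x r, ((‖u t y‖₊ : ℝ≥0∞)) ^ 2) ^ (1/2 : ℝ)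
          ≤ C * ENNReal.ofReal (T ^ (β+1)) *
              volume (ball x r) ^ ((1:ℝ)/2 - (1/p).toReal) * tentFull n p (β+1) u := by
  have hb : (0:ℝ) ≤ β + 1 := by linarith
  refine ⟨2 ^ n, ?_⟩
  intro u hu x r T hr hT hTr
  obtain ⟨G, hGdef⟩ : ∃ G : ℝ → Spc n → ℝ≥0∞,
      G = fun t y => (ENNReal.ofReal (t ^ (-(β+1))) * (‖u t y‖₊ : ℝ≥0∞)) ^ 2 := ⟨_, rfl⟩
  have hGmeas : Measurable (fun q : ℝ × Spc n => G q.1 q.2) := by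
    simp only [hGdef]; fun_prop
  obtain ⟨v, hvdef⟩ : ∃ v : ℝ → ℝ≥0∞,
      v = fun t => (volume (ball (0 : Spc n) (t ^ ((2:ℝ)⁻¹))))⁻¹ := ⟨_, rfl⟩
  have hvmeas : Measurable v := by rw [hvdef]; exact meas_v_aux n
  obtain ⟨J, hJdef⟩ : ∃ J : ℝ≥0∞,
      J = ∫⁻ t in Ioc (0:ℝ) T, ∫⁻ y in ball x r, G t y := ⟨_, rfl⟩
  obtain ⟨c, hcdef⟩ : ∃ c : ℝ≥0∞, c = ENNReal.ofReal (T ^ (β+1)) := ⟨_, rfl⟩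
  have hc_top : c ≠ ∞ := by rw [hcdef]; exact ENNReal.ofReal_ne_top
  have hc2_top : c ^ 2 ≠ ∞ := by simp [pow_eq_top_iff, hc_top]
  rw [← hcdef]
  -- Step 1: weight insertion
  have step1 : (∫⁻ t in Ioc (0:ℝ) T, ∫⁻ y in ball x r, ((‖u t y‖₊ : ℝ≥0∞)) ^ 2)
      ≤ c ^ 2 * J := by
    rw [hJdef, ← lintegral_const_mul' _ _ hc2_top]
    refine lintegral_mono_ae ((ae_restrict_iff' measurableSet_Ioc).2
      (Filter.Eventually.of_forall fun t ht => ?_))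
    rw [← lintegral_const_mul' _ _ hc2_top]
    refine lintegral_mono fun y => ?_
    have h1 : (1:ℝ≥0∞) ≤ c * ENNReal.ofReal (t ^ (-(β+1))) := by
      rw [hcdef, ← ENNReal.ofReal_mul (Real.rpow_nonneg hT.le _)]
      refine ENNReal.one_le_ofReal.2 ?_
      have ht0 : (0:ℝ) < t := ht.1
      have h2 : t ^ (β+1) ≤ T ^ (β+1) := Real.rpow_le_rpow ht0.le ht.2 hb
      have h3 : t ^ (β+1) * t ^ (-(β+1)) = 1 := by
        rw [← Real.rpow_add ht0, show (β+1) + -(β+1) = 0 by ring, Real.rpow_zero]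
      calc (1:ℝ) = t ^ (β+1) * t ^ (-(β+1)) := h3.symm
        _ ≤ T ^ (β+1) * t ^ (-(β+1)) :=
            mul_le_mul_of_nonneg_right h2 (Real.rpow_nonneg ht0.le _)
    calc ((‖u t y‖₊ : ℝ≥0∞)) ^ 2 = (1 * (‖u t y‖₊ : ℝ≥0∞)) ^ 2 := by rw [one_mul]
      _ ≤ ((c * ENNReal.ofReal (t ^ (-(β+1)))) * (‖u t y‖₊ : ℝ≥0∞)) ^ 2 :=
          pow_le_pow_left₀ (zero_le) (mul_le_mul_left h1 _) 2
      _ = c ^ 2 * G t y := by simp only [hGdef]; rw [mul_assoc, mul_pow]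
  -- the aperture-1 square-function kernel
  obtain ⟨K, hKdef⟩ : ∃ K : Spc n → ℝ≥0∞,
      K = fun w => ∫⁻ t in Ioi (0:ℝ),
        (volume (ball w (t ^ ((2:ℝ)⁻¹))))⁻¹ * ∫⁻ y in ball w (t ^ ((2:ℝ)⁻¹)), G t y := ⟨_, rfl⟩
  have hconA : ∀ w, conicalSq n (β+1) u w = K w ^ (1/2 : ℝ) := by
    intro w
    simp only [hKdef, hGdef, conicalSq]
  obtain ⟨f, hfdef⟩ : ∃ f : Spc n → ℝ → ℝ≥0∞,
      f = fun w t => v t * ∫⁻ y, (ball w (t ^ ((2:ℝ)⁻¹))).indicator (G t) y := ⟨_, rfl⟩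
  have hKf : ∀ w, K w = ∫⁻ t in Ioi (0:ℝ), f w t := by
    intro w
    simp only [hKdef, hfdef, hvdef]
    refine lintegral_congr fun t => ?_
    rw [Measure.addHaar_ball_center volume w, lintegral_indicator measurableSet_ball]
  have hfmeas : Measurable (fun z : ℝ × Spc n => f z.2 z.1) := by
    have hF : Measurable (fun q : ℝ × Spc n =>
        ∫⁻ y, (ball q.2 (q.1 ^ ((2:ℝ)⁻¹))).indicator (G q.1) y) :=
      (meas_indicator_aux G hGmeas).lintegral_prod_right'
    simp only [hfdef]
    exact (hvmeas.comp measurable_fst).mul hF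
  have hfmeas' : Measurable (fun q : Spc n × ℝ => f q.1 q.2) := by
    have hF : Measurable (fun q : Spc n × ℝ =>
        ∫⁻ y, (ball q.1 (q.2 ^ ((2:ℝ)⁻¹))).indicator (G q.2) y) :=
      (meas_indicator_aux2 G hGmeas).lintegral_prod_right'
    simp only [hfdef]
    exact (hvmeas.comp measurable_snd).mul hF
  -- Step 2: core Fubini/cone argument
  have key : ∀ t ∈ Ioc (0:ℝ) T,
      (∫⁻ y in ball x r, G t y) ≤ ∫⁻ w in ball x (2*r), f w t := by
    intro t ht
    set st : ℝ := t ^ ((2:ℝ)⁻¹) with hstdef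
    have hst : 0 < st := Real.rpow_pos_of_pos ht.1 _
    have hstr : st < r := by
      have h1 : st ≤ T ^ ((2:ℝ)⁻¹) := Real.rpow_le_rpow ht.1.le ht.2 (by norm_num)
      have h2 : T ^ ((2:ℝ)⁻¹) < ((r:ℝ)^2) ^ ((2:ℝ)⁻¹) :=
        Real.rpow_lt_rpow hT.le hTr (by norm_num)
      rw [sqrt_sq_aux hr] at h2
      linarith
    have hVpos : volume (ball (0:Spc n) st) ≠ 0 := (measure_ball_pos _ _ hst).ne'
    have hVtop : volume (ball (0:Spc n) st) ≠ ∞ := measure_ball_lt_top.ne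
    have hvt : v t = (volume (ball (0:Spc n) st))⁻¹ := by rw [hvdef]
    have hvt_top : v t ≠ ∞ := by rw [hvt]; exact ENNReal.inv_ne_top.2 hVpos
    have hsub : ∀ y ∈ ball x r, ball y st ⊆ ball x (2*r) := by
      intro y hy
      refine ball_subset_ball' ?_
      have := mem_ball.1 hy
      nlinarith [dist_nonneg (x := y) (y := x)]
    have hGt : Measurable (G t) := by
      simp only [hGdef]; fun_prop
    have inner_eval : ∀ y : Spc n, (∫⁻ w in ball x (2*r), (ball w st).indicator (G t) y)
        = G t y * volume (ball y st ∩ ball x (2*r)) := by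
      intro y
      have hsymm : ∀ w : Spc n, (ball w st).indicator (G t) y
          = (ball y st).indicator (fun _ => G t y) w := by
        intro w
        have hmem : y ∈ ball w st ↔ w ∈ ball y st := by
          rw [mem_ball, mem_ball, dist_comm]
        by_cases h : y ∈ ball w st
        · rw [Set.indicator_of_mem h, Set.indicator_of_mem (hmem.1 h)]
        · rw [Set.indicator_of_notMem h, Set.indicator_of_notMem (fun hc => h (hmem.2 hc))]
      calc (∫⁻ w in ball x (2*r), (ball w st).indicator (G t) y)
          = ∫⁻ w in ball x (2*r), (ball y st).indicator (fun _ => G t y) w :=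
            lintegral_congr hsymm
        _ = ∫⁻ w in ball y st ∩ ball x (2*r), G t y := by
            rw [lintegral_indicator measurableSet_ball,
              Measure.restrict_restrict measurableSet_ball]
        _ = G t y * volume (ball y st ∩ ball x (2*r)) := by
            rw [setLIntegral_const]
    have swap2 : (∫⁻ w in ball x (2*r), ∫⁻ y, (ball w st).indicator (G t) y)
        = ∫⁻ y, ∫⁻ w in ball x (2*r), (ball w st).indicator (G t) y :=
      lintegral_lintegral_swap (meas_indicator_fixed st (G t) hGt).aemeasurable
    calc (∫⁻ y in ball x r, G t y)
        = v t * (volume (ball (0:Spc n) st) * ∫⁻ y in ball x r, G t y) := by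
          rw [← mul_assoc, hvt, ENNReal.inv_mul_cancel hVpos hVtop, one_mul]
      _ = v t * ∫⁻ y in ball x r, G t y * volume (ball y st ∩ ball x (2*r)) := by
          rw [← lintegral_const_mul' _ _ hVtop]
          congr 1
          refine setLIntegral_congr_fun_ae measurableSet_ball
            (Filter.Eventually.of_forall fun y hy => ?_)
          rw [inter_eq_left.2 (hsub y hy), Measure.addHaar_ball_center volume y, mul_comm]
      _ ≤ v t * ∫⁻ y, G t y * volume (ball y st ∩ ball x (2*r)) :=
          mul_le_mul_right (setLIntegral_le_lintegral _ _) _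
      _ = v t * ∫⁻ y, ∫⁻ w in ball x (2*r), (ball w st).indicator (G t) y := by
          congr 1
          exact (lintegral_congr inner_eval).symm
      _ = v t * ∫⁻ w in ball x (2*r), ∫⁻ y, (ball w st).indicator (G t) y := by rw [swap2]
      _ = ∫⁻ w in ball x (2*r), f w t := by
          rw [← lintegral_const_mul' _ _ hvt_top]
          simp only [hfdef]; rfl
  have step2 : J ≤ ∫⁻ w in ball x (2*r), K w := by
    calc J ≤ ∫⁻ t in Ioc (0:ℝ) T, ∫⁻ w in ball x (2*r), f w t := by
          rw [hJdef]
          exact lintegral_mono_ae ((ae_restrict_iff' measurableSet_Ioc).2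
            (Filter.Eventually.of_forall key))
      _ = ∫⁻ w in ball x (2*r), ∫⁻ t in Ioc (0:ℝ) T, f w t :=
          lintegral_lintegral_swap hfmeas.aemeasurable
      _ ≤ ∫⁻ w in ball x (2*r), K w := by
          refine lintegral_mono fun w => ?_
          rw [hKf w]
          exact lintegral_mono_set Ioc_subset_Ioi_self
  -- basic ball facts
  have hBpos : volume (ball x r) ≠ 0 := (measure_ball_pos _ _ hr).ne'
  have hBtop : volume (ball x r) ≠ ∞ := measure_ball_lt_top.ne
  have hL12 : ∀ X : ℝ≥0∞, (X ^ (2:ℕ)) ^ ((1:ℝ)/2) = X := by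
    intro X
    rw [← ENNReal.rpow_natCast X 2, ← ENNReal.rpow_mul]
    norm_num
  -- main split on p
  rcases eq_or_ne p ∞ with hpi | hpi
  · -- case p = ∞
    subst hpi
    have htf : tentFull n ∞ (β+1) u = tentNormTop n (β+1) u := if_pos rfl
    obtain ⟨N, hNdef⟩ : ∃ N : ℝ≥0∞, N = tentNormTop n (β+1) u := ⟨_, rfl⟩
    have hterm : (∫⁻ t in Ioc (0:ℝ) ((r:ℝ)^2),
        (volume (ball x r))⁻¹ * ∫⁻ y in ball x r, G t y) ^ (1/2 : ℝ) ≤ N := by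
      rw [hNdef, tentNormTop, hGdef]
      exact le_iSup_of_le x (le_iSup_of_le ⟨r, hr⟩ le_rfl)
    have hinv_top : (volume (ball x r))⁻¹ ≠ ∞ := ENNReal.inv_ne_top.2 hBpos
    have hX : (volume (ball x r))⁻¹ * J ≤ N ^ (2:ℕ) := by
      have h1 : (volume (ball x r))⁻¹ * J ≤ ∫⁻ t in Ioc (0:ℝ) ((r:ℝ)^2),
          (volume (ball x r))⁻¹ * ∫⁻ y in ball x r, G t y := by
        rw [hJdef, ← lintegral_const_mul' _ _ hinv_top]
        exact lintegral_mono_set (Ioc_subset_Ioc le_rfl hTr.le)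
      refine h1.trans ?_
      have h2 := pow_le_pow_left₀ (zero_le) hterm 2
      rwa [← ENNReal.rpow_natCast (_ ^ (1/2:ℝ)) 2, ← ENNReal.rpow_mul,
        (by norm_num : (1/2:ℝ) * (2:ℕ) = 1), ENNReal.rpow_one] at h2
    have hJle : J ≤ volume (ball x r) * N ^ (2:ℕ) := by
      calc J = volume (ball x r) * ((volume (ball x r))⁻¹ * J) := by
            rw [← mul_assoc, ENNReal.mul_inv_cancel hBpos hBtop, one_mul]
        _ ≤ volume (ball x r) * N ^ (2:ℕ) := mul_le_mul_right hX _
    calc (∫⁻ t in Ioc (0:ℝ) T, ∫⁻ y in ball x r, ((‖u t y‖₊ : ℝ≥0∞)) ^ 2) ^ (1/2 : ℝ)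
        ≤ (c ^ 2 * (volume (ball x r) * N ^ (2:ℕ))) ^ (1/2 : ℝ) :=
          ENNReal.rpow_le_rpow (step1.trans (mul_le_mul_right hJle _)) (by norm_num)
      _ = c * (volume (ball x r) ^ ((1:ℝ)/2) * N) := by
          rw [ENNReal.mul_rpow_of_nonneg _ _ (by norm_num : (0:ℝ) ≤ 1/2),
            ENNReal.mul_rpow_of_nonneg _ _ (by norm_num : (0:ℝ) ≤ 1/2),
            hL12 c, hL12 N]
      _ ≤ ((2:ℝ≥0∞) ^ n) * c * (volume (ball x r) ^ ((1:ℝ)/2) * N) := by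
          refine mul_le_mul_left ?_ _
          calc c = 1 * c := (one_mul c).symm
            _ ≤ ((2:ℝ≥0∞) ^ n) * c := mul_le_mul_left (one_le_pow_of_one_le' one_le_two n) _
      _ = ↑((2:ℝ≥0) ^ n) * c * volume (ball x r) ^ ((1:ℝ)/2 - (1/∞).toReal) *
            tentFull n ∞ (β+1) u := by
          rw [htf, ← hNdef]
          have h0 : ((1:ℝ≥0∞)/∞).toReal = 0 := by simp
          rw [h0]
          push_cast
          ring_nf
  · -- case p < ∞
    have hp2 : (2:ℝ) ≤ p.toReal := by
      have := ENNReal.toReal_mono hpi hp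
      simpa using this
    have hp0 : (0:ℝ) < p.toReal := by linarith
    obtain ⟨p', hp'def⟩ : ∃ p' : ℝ, p' = p.toReal := ⟨_, rfl⟩
    rw [← hp'def] at hp2 hp0
    have htf : tentFull n p (β+1) u
        = (∫⁻ w, conicalSq n (β+1) u w ^ p') ^ (1/p') := by
      rw [tentFull, if_neg hpi, hp'def]
    have hApow : ∀ w, conicalSq n (β+1) u w ^ p' = K w ^ ((1/2) * p') := by
      intro w
      rw [hconA w, ← ENNReal.rpow_mul]
    have hKmeas : Measurable K := by
      have h1 : Measurable (fun w => ∫⁻ t in Ioi (0:ℝ), f w t) :=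
        hfmeas'.lintegral_prod_right'
      have h2 : K = fun w => ∫⁻ t in Ioi (0:ℝ), f w t := funext hKf
      rw [h2]
      exact h1
    -- Hölder
    have holder : (∫⁻ w in ball x (2*r), K w)
        ≤ (∫⁻ w, conicalSq n (β+1) u w ^ p') ^ (2/p') *
            volume (ball x (2*r)) ^ (1 - 2/p') := by
      rcases eq_or_lt_of_le hp2 with hp2e | hp2l
      · -- p' = 2
        have h2 : (2:ℝ)/p' = 1 := by rw [← hp2e]; norm_num
        rw [h2, show (1:ℝ) - 1 = 0 by norm_num, ENNReal.rpow_one, ENNReal.rpow_zero, mul_one]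
        calc (∫⁻ w in ball x (2*r), K w) ≤ ∫⁻ w, K w := setLIntegral_le_lintegral _ _
          _ = ∫⁻ w, conicalSq n (β+1) u w ^ p' := by
              refine lintegral_congr fun w => ?_
              rw [hApow w, ← hp2e]
              norm_num
      · -- 2 < p'
        have ha : 1 < p'/2 := by linarith
        have hpq : (p'/2).HolderConjugate (Real.conjExponent (p'/2)) :=
          Real.HolderConjugate.conjExponent ha
        have hq : 1/(Real.conjExponent (p'/2)) = 1 - 2/p' := by
          have h1 := hpq.inv_add_inv_eq_one
          have h2 : (Real.conjExponent (p'/2))⁻¹ = 1 - (p'/2)⁻¹ := by linarith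
          rw [one_div, h2]
          field_simp
        have hmain := ENNReal.lintegral_mul_le_Lp_mul_Lq (volume.restrict (ball x (2*r))) hpq
          hKmeas.aemeasurable (aemeasurable_const (b := (1:ℝ≥0∞)))
        simp only [Pi.mul_apply, mul_one, ENNReal.one_rpow, lintegral_const,
          Measure.restrict_apply MeasurableSet.univ, univ_inter, one_mul] at hmain
        refine hmain.trans ?_
        refine mul_le_mul ?_ ?_ (zero_le) (zero_le)
        · have h1 : (∫⁻ w in ball x (2*r), K w ^ (p'/2)) ≤ ∫⁻ w, K w ^ (p'/2) :=
            setLIntegral_le_lintegral _ _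
          have h2 : (∫⁻ w, K w ^ (p'/2)) = ∫⁻ w, conicalSq n (β+1) u w ^ p' := by
            refine lintegral_congr fun w => ?_
            rw [hApow w]
            ring_nf
          have h3 : (1:ℝ)/(p'/2) = 2/p' := by
            field_simp
          rw [← h3, ← h2]
          exact ENNReal.rpow_le_rpow h1 (by positivity)
        · rw [hq]
    -- volume of the doubled ball
    have hdbl : volume (ball x (2*r)) = (2:ℝ≥0∞) ^ n * volume (ball x r) := by
      rw [Measure.addHaar_ball_mul_of_pos volume x (by norm_num : (0:ℝ) < 2) r,
        Measure.addHaar_ball_center volume x r]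
      congr 1
      rw [show (Module.finrank ℝ (Spc n)) = n from finrank_euclideanSpace_fin]
      rw [← ENNReal.ofReal_ofNat, ← ENNReal.ofReal_pow (by norm_num)]
    have hθ0 : (0:ℝ) ≤ 1/2 - 1/p' := by
      have : 1/p' ≤ 1/2 := by
        rw [div_le_div_iff₀ hp0 (by norm_num)]
        linarith
      linarith
    have hθ1 : (1:ℝ)/2 - 1/p' ≤ 1 := by
      have : 0 ≤ 1/p' := by positivity
      linarith
    have h2pow : ((2:ℝ≥0∞) ^ n) ^ ((1:ℝ)/2 - 1/p') ≤ (2:ℝ≥0∞) ^ n := by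
      calc ((2:ℝ≥0∞) ^ n) ^ ((1:ℝ)/2 - 1/p') ≤ ((2:ℝ≥0∞) ^ n) ^ (1:ℝ) :=
            ENNReal.rpow_le_rpow_of_exponent_le (one_le_pow_of_one_le' one_le_two n) hθ1
        _ = (2:ℝ≥0∞) ^ n := ENNReal.rpow_one _
    have hexp : ((1:ℝ≥0∞)/p).toReal = 1/p' := by
      rw [one_div, ENNReal.toReal_inv, hp'def, one_div]
    -- assemble
    have hhalf : ((1:ℝ) - 2/p') * (1/2) = 1/2 - 1/p' := by ring
    have h2half : ((2:ℝ)/p') * (1/2) = 1/p' := by ring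
    calc (∫⁻ t in Ioc (0:ℝ) T, ∫⁻ y in ball x r, ((‖u t y‖₊ : ℝ≥0∞)) ^ 2) ^ (1/2 : ℝ)
        ≤ (c ^ 2 * ((∫⁻ w, conicalSq n (β+1) u w ^ p') ^ (2/p') *
            volume (ball x (2*r)) ^ (1 - 2/p'))) ^ (1/2 : ℝ) :=
          ENNReal.rpow_le_rpow (step1.trans (mul_le_mul_right (step2.trans holder) _))
            (by norm_num)
      _ = c * ((∫⁻ w, conicalSq n (β+1) u w ^ p') ^ ((1:ℝ)/p') *
            volume (ball x (2*r)) ^ ((1:ℝ)/2 - 1/p')) := by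
          rw [ENNReal.mul_rpow_of_nonneg _ _ (by norm_num : (0:ℝ) ≤ 1/2),
            ENNReal.mul_rpow_of_nonneg _ _ (by norm_num : (0:ℝ) ≤ 1/2),
            hL12 c, ← ENNReal.rpow_mul, ← ENNReal.rpow_mul, h2half, hhalf]
      _ ≤ c * ((∫⁻ w, conicalSq n (β+1) u w ^ p') ^ ((1:ℝ)/p') *
            ((2:ℝ≥0∞) ^ n * volume (ball x r) ^ ((1:ℝ)/2 - 1/p'))) := by
          refine mul_le_mul_right (mul_le_mul_right ?_ _) _
          rw [hdbl, ENNReal.mul_rpow_of_nonneg _ _ hθ0]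
          exact mul_le_mul_left h2pow _
      _ = ↑((2:ℝ≥0) ^ n) * c * volume (ball x r) ^ ((1:ℝ)/2 - (1/p).toReal) *
            tentFull n p (β+1) u := by
          rw [htf, hexp]
          push_cast
          ring_nf
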